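/- In the two-dimensional yarmulke Morse geometry, write Z = √(ζ−1). Let 0 < φ_s ≤ π, r_s > 0 and a be reals with r_s e^{φ_s/Z} < a < ε, let s = r_s(cos φ_s, sin φ_s) and q = (a, 0). Then the curve γ : [0,1] → ℝ², γ(t) = ρ(t)(cos φ(t), sin φ(t)) with φ(t) = (1−t)φ_s and ρ(t) = [t·a + (1−t)·r_s e^{φ_s/Z}] e^{−φ(t)/Z}, lies entirely in N, runs from γ(0) = s to γ(1) = q, and is future-directed timelike (g_{γ(t)}(γ'(t),γ'(t)) < 0 and γ(t)·γ'(t) > 0 for all t). In particular s ≪ q. -/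

import Mathlib

noncomputable section

open Set

/-- The punctured disc `N = {p : 0 < |p| < ε}` (Euclidean norm). -/
def NY (ε : ℝ) : Set (ℝ × ℝ) :=
  {p | 0 < p.1 ^ 2 + p.2 ^ 2 ∧ p.1 ^ 2 + p.2 ^ 2 < ε ^ 2}

/-- Euclidean dot product on ℝ². -/
def dot2 (a b : ℝ × ℝ) : ℝ := a.1 * b.1 + a.2 * b.2

/-- Planar cross product `p × w = p₁w₂ − p₂w₁`. -/
def cross2 (a b : ℝ × ℝ) : ℝ := a.1 * b.2 - a.2 * b.1

/-- The yarmulke Morse metric (quadratic form) built from `f(p) = |p|²`: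
`g_p(w,w) = 4|p|²|w|² − 4ζ(p·w)²`. -/
def gY (ζ : ℝ) (p w : ℝ × ℝ) : ℝ :=
  4 * dot2 p p * dot2 w w - 4 * ζ * dot2 p w ^ 2

/-- A future-directed timelike curve: a C¹ curve in `N` with everywhere timelike
tangent satisfying the future-pointing condition `γ(t)·γ'(t) > 0`. -/
def TimelikeY (ζ ε : ℝ) (γ γ' : ℝ → ℝ × ℝ) : Prop :=
  (∀ t ∈ Icc (0 : ℝ) 1, HasDerivAt γ (γ' t) t) ∧
  ContinuousOn γ' (Icc (0 : ℝ) 1) ∧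
  (∀ t ∈ Icc (0 : ℝ) 1, γ t ∈ NY ε) ∧
  (∀ t ∈ Icc (0 : ℝ) 1, gY ζ (γ t) (γ' t) < 0) ∧
  (∀ t ∈ Icc (0 : ℝ) 1, 0 < dot2 (γ t) (γ' t))

/-- The chronology relation `q ≪ p`. -/
def chronY (ζ ε : ℝ) (q p : ℝ × ℝ) : Prop :=
  ∃ γ γ', TimelikeY ζ ε γ γ' ∧ γ 0 = q ∧ γ 1 = p

def IplusY (ζ ε : ℝ) (q : ℝ × ℝ) : Set (ℝ × ℝ) := {p ∈ NY ε | chronY ζ ε q p}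

def IminusY (ζ ε : ℝ) (q : ℝ × ℝ) : Set (ℝ × ℝ) := {p ∈ NY ε | chronY ζ ε p q}

/-- The angle `φ_p ∈ (−π, π]` of a point of the plane. -/
def ang (p : ℝ × ℝ) : ℝ := Complex.arg ((p.1 : ℂ) + (p.2 : ℂ) * Complex.I)

/-! The curve is a log spiral `ρ = A e^{-φ/Z}` whose prefactor `A` grows linearly from
`r_s e^{φ_s/Z}` to `a` while the angle `φ` decreases linearly from `φ_s` to `0`.
In polar coordinates `g = 4ρ²((ρφ')² − Z²ρ'²)` and `γ·γ' = ρρ'`, and for such a spiral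
`Zρ' = ρ|φ'| + Z A' e^{-φ/Z}`: with constant `A` the spiral would be null, and the growth
`A' > 0` makes it timelike and future-directed. -/

def polar (r θ : ℝ) : ℝ × ℝ := (r * Real.cos θ, r * Real.sin θ)

def polarVel (r θ r' θ' : ℝ) : ℝ × ℝ :=
  (r' * Real.cos θ - r * θ' * Real.sin θ, r' * Real.sin θ + r * θ' * Real.cos θ)

theorem HasDerivAt.polar {ρ φ : ℝ → ℝ} {ρ' φ' t : ℝ} (hρ : HasDerivAt ρ ρ' t)
    (hφ : HasDerivAt φ φ' t) :
    HasDerivAt (fun t => _root_.polar (ρ t) (φ t)) (polarVel (ρ t) (φ t) ρ' φ') t := by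
  refine ((hρ.mul hφ.cos).prodMk (hρ.mul hφ.sin)).congr_deriv ?_
  simp only [polarVel, Prod.mk.injEq]
  constructor <;> ring

theorem polar_mem_NY {r ε : ℝ} (θ : ℝ) (hr : 0 < r) (hrε : r < ε) : polar r θ ∈ NY ε := by
  have hnorm : (polar r θ).1 ^ 2 + (polar r θ).2 ^ 2 = r ^ 2 := by
    simp only [polar]
    linear_combination r ^ 2 * Real.sin_sq_add_cos_sq θ
  simp only [NY, mem_ofPred_eq, hnorm]
  exact ⟨by positivity, by gcongr⟩

theorem dot2_polar_polarVel (r θ r' θ' : ℝ) : dot2 (polar r θ) (polarVel r θ r' θ') = r * r' := by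
  simp only [dot2, polar, polarVel]
  linear_combination r * r' * Real.sin_sq_add_cos_sq θ

theorem gY_polar_polarVel (ζ r θ r' θ' : ℝ) :
    gY ζ (polar r θ) (polarVel r θ r' θ') = 4 * r ^ 2 * ((r * θ') ^ 2 - (ζ - 1) * r' ^ 2) := by
  simp only [gY, dot2, polar, polarVel]
  linear_combination (4 * r ^ 2 * (r' ^ 2 + (r * θ') ^ 2) - 4 * ζ * r ^ 2 * r' ^ 2) *
    (Real.sin θ ^ 2 + Real.cos θ ^ 2 + 1) * Real.sin_sq_add_cos_sq θ

theorem timelikeY_polar {ζ ε : ℝ} {ρ φ ρ' φ' : ℝ → ℝ}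
    (hρ : ∀ t ∈ Icc (0 : ℝ) 1, HasDerivAt ρ (ρ' t) t)
    (hφ : ∀ t ∈ Icc (0 : ℝ) 1, HasDerivAt φ (φ' t) t)
    (hρ' : ContinuousOn ρ' (Icc 0 1)) (hφ' : ContinuousOn φ' (Icc 0 1))
    (hpos : ∀ t ∈ Icc (0 : ℝ) 1, 0 < ρ t) (hlt : ∀ t ∈ Icc (0 : ℝ) 1, ρ t < ε)
    (hfuture : ∀ t ∈ Icc (0 : ℝ) 1, 0 < ρ' t)
    (hcone : ∀ t ∈ Icc (0 : ℝ) 1, (ρ t * φ' t) ^ 2 < (ζ - 1) * ρ' t ^ 2) :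
    TimelikeY ζ ε (fun t => polar (ρ t) (φ t)) (fun t => polarVel (ρ t) (φ t) (ρ' t) (φ' t)) := by
  have hρc : ContinuousOn ρ (Icc 0 1) := fun t ht => (hρ t ht).continuousAt.continuousWithinAt
  have hφc : ContinuousOn φ (Icc 0 1) := fun t ht => (hφ t ht).continuousAt.continuousWithinAt
  refine ⟨fun t ht => (hρ t ht).polar (hφ t ht), ?_,
    fun t ht => polar_mem_NY _ (hpos t ht) (hlt t ht), fun t ht => ?_, fun t ht => ?_⟩
  · simp only [polarVel]
    fun_prop
  · rw [gY_polar_polarVel]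
    have := hpos t ht
    exact mul_neg_of_pos_of_neg (by positivity) (by linarith [hcone t ht])
  · rw [dot2_polar_polarVel]
    exact mul_pos (hpos t ht) (hfuture t ht)

section LogSpiral

variable (Z φs R a : ℝ)

def spiralRadius (t : ℝ) : ℝ := (t * a + (1 - t) * R) * Real.exp (-((1 - t) * φs) / Z)

def spiralRadiusDeriv (t : ℝ) : ℝ :=
  (a - R + (t * a + (1 - t) * R) * φs / Z) * Real.exp (-((1 - t) * φs) / Z)

theorem hasDerivAt_spiralRadius (t : ℝ) :
    HasDerivAt (spiralRadius Z φs R a) (spiralRadiusDeriv Z φs R a t) t := by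
  have hA : HasDerivAt (fun t => t * a + (1 - t) * R) (a - R) t := by
    refine (((hasDerivAt_id' t).mul_const a).add
      (((hasDerivAt_id' t).const_sub 1).mul_const R)).congr_deriv ?_
    ring
  have hE : HasDerivAt (fun t => Real.exp (-((1 - t) * φs) / Z))
      (Real.exp (-((1 - t) * φs) / Z) * (φs / Z)) t := by
    refine ((((hasDerivAt_id' t).const_sub 1).mul_const φs).neg.div_const Z).exp.congr_deriv ?_
    simp only [Pi.neg_apply]
    ring
  refine (hA.mul hE).congr_deriv ?_
  unfold spiralRadiusDeriv
  ring

theorem continuous_spiralRadiusDeriv : Continuous (spiralRadiusDeriv Z φs R a) := by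
  unfold spiralRadiusDeriv
  fun_prop

theorem spiralRadius_zero (rs : ℝ) :
    spiralRadius Z φs (rs * Real.exp (φs / Z)) a 0 = rs := by
  simp only [spiralRadius, zero_mul, sub_zero, one_mul, zero_add, neg_div, mul_assoc,
    ← Real.exp_add, add_neg_cancel, Real.exp_zero, mul_one]

theorem spiralRadius_one : spiralRadius Z φs R a 1 = a := by
  simp [spiralRadius]

variable {Z φs R a}

theorem mul_spiralRadiusDeriv (hZ : Z ≠ 0) (t : ℝ) :
    Z * spiralRadiusDeriv Z φs R a t =
      Z * (a - R) * Real.exp (-((1 - t) * φs) / Z) + spiralRadius Z φs R a t * φs := by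
  simp only [spiralRadiusDeriv, spiralRadius]
  field_simp

theorem spiralRadius_mul_lt (hZ : 0 < Z) (hRa : R < a) (t : ℝ) :
    spiralRadius Z φs R a t * φs < Z * spiralRadiusDeriv Z φs R a t := by
  have := sub_pos.2 hRa
  rw [mul_spiralRadiusDeriv hZ.ne']
  linarith [show 0 < Z * (a - R) * Real.exp (-((1 - t) * φs) / Z) by positivity]

variable {t : ℝ}

theorem spiralRadius_pos (ht : t ∈ Icc (0 : ℝ) 1) (hR : 0 < R) (hRa : R ≤ a) :
    0 < spiralRadius Z φs R a t := by
  have : 0 < t * a + (1 - t) * R := by nlinarith [ht.1, ht.2]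
  unfold spiralRadius
  positivity

theorem spiralRadius_le (ht : t ∈ Icc (0 : ℝ) 1) (hZ : 0 ≤ Z) (hφs : 0 ≤ φs) (ha : 0 ≤ a)
    (hRa : R ≤ a) : spiralRadius Z φs R a t ≤ a := by
  have hA : t * a + (1 - t) * R ≤ a := by nlinarith [ht.1, ht.2]
  have hE : Real.exp (-((1 - t) * φs) / Z) ≤ 1 := by
    rw [Real.exp_le_one_iff]
    exact div_nonpos_of_nonpos_of_nonneg (neg_nonpos.2 (mul_nonneg (by linarith [ht.2]) hφs)) hZ
  calc spiralRadius Z φs R a t ≤ a * 1 := mul_le_mul hA hE (Real.exp_pos _).le ha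
    _ = a := mul_one a

theorem spiralRadiusDeriv_pos (ht : t ∈ Icc (0 : ℝ) 1) (hZ : 0 < Z) (hφs : 0 ≤ φs) (hR : 0 < R)
    (hRa : R < a) : 0 < spiralRadiusDeriv Z φs R a t := by
  have : 0 ≤ spiralRadius Z φs R a t * φs := mul_nonneg (spiralRadius_pos ht hR hRa.le).le hφs
  exact pos_of_mul_pos_right ((spiralRadius_mul_lt hZ hRa t).trans_le' this) hZ.le

theorem sq_spiralRadius_mul_lt (ht : t ∈ Icc (0 : ℝ) 1) (hZ : 0 < Z) (hφs : 0 ≤ φs) (hR : 0 < R)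
    (hRa : R < a) :
    (spiralRadius Z φs R a t * -φs) ^ 2 < Z ^ 2 * spiralRadiusDeriv Z φs R a t ^ 2 := by
  have : 0 ≤ spiralRadius Z φs R a t * φs := mul_nonneg (spiralRadius_pos ht hR hRa.le).le hφs
  calc (spiralRadius Z φs R a t * -φs) ^ 2 = (spiralRadius Z φs R a t * φs) ^ 2 := by ring
    _ < (Z * spiralRadiusDeriv Z φs R a t) ^ 2 :=
        pow_lt_pow_left₀ (spiralRadius_mul_lt hZ hRa t) this two_ne_zero
    _ = Z ^ 2 * spiralRadiusDeriv Z φs R a t ^ 2 := mul_pow _ _ 2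

end LogSpiral

theorem stmt6_general (ζ ε : ℝ) (hζ : 1 < ζ) (φs rs a : ℝ)
    (hφ0 : 0 < φs) (hrs : 0 < rs)
    (hra : rs * Real.exp (φs / Real.sqrt (ζ - 1)) < a) (haε : a < ε) :
    let Z := Real.sqrt (ζ - 1)
    let φ : ℝ → ℝ := fun t => (1 - t) * φs
    let ρ : ℝ → ℝ := fun t =>
      (t * a + (1 - t) * (rs * Real.exp (φs / Z))) * Real.exp (-φ t / Z)
    let γ : ℝ → ℝ × ℝ := fun t => (ρ t * Real.cos (φ t), ρ t * Real.sin (φ t))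
    (∀ t ∈ Icc (0 : ℝ) 1, γ t ∈ NY ε) ∧
    γ 0 = (rs * Real.cos φs, rs * Real.sin φs) ∧
    γ 1 = (a, 0) ∧
    (∀ t ∈ Icc (0 : ℝ) 1,
      DifferentiableAt ℝ γ t ∧
      gY ζ (γ t) (deriv γ t) < 0 ∧
      0 < dot2 (γ t) (deriv γ t)) ∧
    chronY ζ ε (rs * Real.cos φs, rs * Real.sin φs) (a, 0) := by
  intro Z φ ρ γ
  have hZ : 0 < Z := Real.sqrt_pos.2 (sub_pos.2 hζ)
  have hZζ : Z ^ 2 = ζ - 1 := Real.sq_sqrt (sub_pos.2 hζ).le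
  have hR : 0 < rs * Real.exp (φs / Z) := by positivity
  have hcurve : TimelikeY ζ ε γ fun t =>
      polarVel (ρ t) (φ t) (spiralRadiusDeriv Z φs (rs * Real.exp (φs / Z)) a t) (-φs) :=
    timelikeY_polar (fun t _ => hasDerivAt_spiralRadius _ _ _ _ t)
      (fun t _ => (((hasDerivAt_id' t).const_sub 1).mul_const φs).congr_deriv (by ring))
      (continuous_spiralRadiusDeriv _ _ _ _).continuousOn continuousOn_const
      (fun t ht => spiralRadius_pos ht hR hra.le)
      (fun t ht => (spiralRadius_le ht hZ.le hφ0.le (hR.trans hra).le hra.le).trans_lt haε)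
      (fun t ht => spiralRadiusDeriv_pos ht hZ hφ0.le hR hra)
      (fun t ht => hZζ ▸ sq_spiralRadius_mul_lt ht hZ hφ0.le hR hra)
  have hγ0 : γ 0 = (rs * Real.cos φs, rs * Real.sin φs) := by
    change polar (spiralRadius Z φs (rs * Real.exp (φs / Z)) a 0) ((1 - 0) * φs) = _
    rw [spiralRadius_zero, sub_zero, one_mul, polar]
  have hγ1 : γ 1 = (a, 0) := by
    change polar (spiralRadius Z φs (rs * Real.exp (φs / Z)) a 1) ((1 - 1) * φs) = _
    simp [spiralRadius_one, polar]
  refine ⟨hcurve.2.2.1, hγ0, hγ1, fun t ht => ?_, _, _, hcurve, hγ0, hγ1⟩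
  obtain ⟨hd, -, -, hg, hdot⟩ := hcurve
  rw [(hd t ht).deriv]
  exact ⟨(hd t ht).differentiableAt, hg t ht, hdot t ht⟩

/-- the explicit interpolating curve
`γ(t) = ρ(t)(cos φ(t), sin φ(t))`, `φ(t) = (1−t)φ_s`,
`ρ(t) = [ta + (1−t)r_s e^{φ_s/Z}]e^{−φ(t)/Z}`, lies in `N`, runs from
`s = r_s(cos φ_s, sin φ_s)` to `q = (a, 0)`, and is future-directed timelike;
in particular `s ≪ q`. -/
theorem stmt6 (ζ ε : ℝ) (hζ : 1 < ζ) (hε : 0 < ε) (φs rs a : ℝ)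
    (hφ0 : 0 < φs) (hφπ : φs ≤ Real.pi) (hrs : 0 < rs)
    (hra : rs * Real.exp (φs / Real.sqrt (ζ - 1)) < a) (haε : a < ε) :
    let Z := Real.sqrt (ζ - 1)
    let φ : ℝ → ℝ := fun t => (1 - t) * φs
    let ρ : ℝ → ℝ := fun t =>
      (t * a + (1 - t) * (rs * Real.exp (φs / Z))) * Real.exp (-φ t / Z)
    let γ : ℝ → ℝ × ℝ := fun t => (ρ t * Real.cos (φ t), ρ t * Real.sin (φ t))
    (∀ t ∈ Icc (0 : ℝ) 1, γ t ∈ NY ε) ∧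
    γ 0 = (rs * Real.cos φs, rs * Real.sin φs) ∧
    γ 1 = (a, 0) ∧
    (∀ t ∈ Icc (0 : ℝ) 1,
      DifferentiableAt ℝ γ t ∧
      gY ζ (γ t) (deriv γ t) < 0 ∧
      0 < dot2 (γ t) (deriv γ t)) ∧
    chronY ζ ε (rs * Real.cos φs, rs * Real.sin φs) (a, 0) :=
  stmt6_general ζ ε hζ φs rs a hφ0 hrs hra haε
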